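/- Let 𝒜 → ℳ be a superalgebroid. Then: (1) the space of morphic vector fields on 𝒜 is closed under the graded commutator bracket; and (2) for any morphic vector field Ξ and any section X ∈ Γ(𝒜), one has [Ξ₁, L_X] = L_{D_Ξ X} as vector fields on [−1]𝒜. -/
import Mathlib


/-!
We model (ℤ-graded) supermanifolds through their ℤ-graded supercommutative
algebras of smooth functions, and vector fields as graded derivations.
-/

noncomputable section

/-- The sign `(−1)^n` for an integer `n`. -/
def sgn (n : ℤ) : ℤ := (-1) ^ n.natAbs

/-- The graded commutator `[D, E] = D ∘ E − (−1)^{pq} E ∘ D` of two operators,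
where `p` and `q` are the degrees of `D` and `E`. -/
def sComm {W : Type} [AddCommGroup W] [Module ℝ W] (p q : ℤ)
    (D E : Module.End ℝ W) : Module.End ℝ W :=
  D * E - sgn (p * q) • (E * D)

/-- A ℤ-graded supercommutative ℝ-algebra; the model for the algebra of smooth
functions `C^∞(ℳ)` of a ℤ-graded supermanifold `ℳ`. -/
structure SuperAlgebra where
  carrier : Type
  [ringStr : Ring carrier]
  [algStr : Algebra ℝ carrier]
  grading : ℤ → Submodule ℝ carrier
  [gradedStr : GradedAlgebra grading]
  supercomm : ∀ {i j : ℤ} {a b : carrier}, a ∈ grading i → b ∈ grading j →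
    a * b = sgn (i * j) • (b * a)

attribute [instance] SuperAlgebra.ringStr SuperAlgebra.algStr SuperAlgebra.gradedStr

namespace SuperAlgebra

/-- An operator is homogeneous of degree `j` if it shifts the grading by `j`. -/
def IsHomogOp (𝒮 : SuperAlgebra) (j : ℤ) (D : Module.End ℝ 𝒮.carrier) : Prop :=
  ∀ i : ℤ, ∀ a ∈ 𝒮.grading i, D a ∈ 𝒮.grading (i + j)

/-- A vector field of degree `j` on a supermanifold: a degree `j` graded (left)
derivation of the function algebra, i.e. `D(ab) = D(a)b + (−1)^{j|a|} a D(b)`. -/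
def IsSuperDer (𝒮 : SuperAlgebra) (j : ℤ) (D : Module.End ℝ 𝒮.carrier) : Prop :=
  𝒮.IsHomogOp j D ∧
    ∀ i : ℤ, ∀ a ∈ 𝒮.grading i, ∀ b : 𝒮.carrier,
      D (a * b) = D a * b + sgn (j * i) • (a * D b)

/-- An (ordinary) manifold is a supermanifold whose functions are concentrated
in degree `0`. -/
def Ordinary (𝒮 : SuperAlgebra) : Prop := ∀ i : ℤ, i ≠ 0 → 𝒮.grading i = ⊥

end SuperAlgebra

/-- The function algebra of the total space of a vector bundle `ℰ → ℳ` in the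
category of supermanifolds: it contains the functions pulled back from the base
(via `incl`) and the distinguished subspace `lin` of fibrewise-linear functions.
The axiom `der_ext` encodes that a vector field on the total space is
determined by its values on base functions and fibre coordinates. -/
structure BundleAlg (𝒮 : SuperAlgebra) where
  Ω : SuperAlgebra
  incl : 𝒮.carrier →ₐ[ℝ] Ω.carrier
  incl_inj : Function.Injective incl
  incl_grading : ∀ {i : ℤ} (f : 𝒮.carrier), f ∈ 𝒮.grading i → incl f ∈ Ω.grading i
  lin : Submodule ℝ Ω.carrier
  lin_smul : ∀ (f : 𝒮.carrier), ∀ α ∈ lin, incl f * α ∈ lin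
  der_ext : ∀ (j : ℤ) (D D' : Module.End ℝ Ω.carrier),
    Ω.IsSuperDer j D → Ω.IsSuperDer j D' →
    (∀ f, D (incl f) = D' (incl f)) → (∀ α ∈ lin, D α = D' α) → D = D'

namespace BundleAlg

variable {𝒮 : SuperAlgebra}

/-- A *linear* vector field of degree `j` on the total space of a vector
bundle: a degree `j` derivation preserving the fibrewise-linear functions
(and covering a vector field on the base). -/
def IsLinVF (E : BundleAlg 𝒮) (j : ℤ) (Ξ : Module.End ℝ E.Ω.carrier) : Prop :=
  E.Ω.IsSuperDer j Ξ ∧ (∀ α ∈ E.lin, Ξ α ∈ E.lin) ∧ ∀ f, ∃ g, Ξ (E.incl f) = E.incl g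

/-- `φ` is the base vector field of the linear vector field `Ξ`. -/
def HasBase (E : BundleAlg 𝒮) (Ξ : Module.End ℝ E.Ω.carrier)
    (φ : Module.End ℝ 𝒮.carrier) : Prop :=
  ∀ f, Ξ (E.incl f) = E.incl (φ f)

/-- Multiplication by (the pullback of) a base function, as an operator. -/
def mulOp (E : BundleAlg 𝒮) (f : 𝒮.carrier) : Module.End ℝ E.Ω.carrier :=
  LinearMap.mulLeft ℝ (E.incl f)

end BundleAlg

/-- The graded space of sections of a vector bundle `𝒜 → ℳ` in the category of
supermanifolds, with its `C^∞(ℳ)`-module structure `smul`. -/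
structure VBundle (𝒮 : SuperAlgebra) where
  secs : Type
  [addStr : AddCommGroup secs]
  [modStr : Module ℝ secs]
  grading : ℤ → Submodule ℝ secs
  smul : 𝒮.carrier →ₗ[ℝ] secs →ₗ[ℝ] secs
  smul_one : ∀ X, smul 1 X = X
  smul_mul : ∀ f g X, smul (f * g) X = smul f (smul g X)
  smul_grading : ∀ {i j : ℤ} (f : 𝒮.carrier) (X : secs),
    f ∈ 𝒮.grading i → X ∈ grading j → smul f X ∈ grading (i + j)

attribute [instance] VBundle.addStr VBundle.modStr

/-- A superalgebroid structure on a vector bundle `𝒜 → ℳ`: a degree `0` anchor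
`ρ : Γ(𝒜) → 𝔛(ℳ)` and a graded skew-symmetric bracket on sections satisfying
the Leibniz rule `[X, fY] = ρ(X)(f)·Y + (−1)^{|X||f|} f [X,Y]`.
(The graded Jacobi identity is the separate predicate `AlgStr.Jacobi`.) -/
structure AlgStr (𝒮 : SuperAlgebra) (V : VBundle 𝒮) where
  anchor : V.secs →ₗ[ℝ] Module.End ℝ 𝒮.carrier
  anchor_der : ∀ {p : ℤ} (X : V.secs), X ∈ V.grading p → 𝒮.IsSuperDer p (anchor X)
  anchor_smul : ∀ (f : 𝒮.carrier) (X : V.secs) (g : 𝒮.carrier),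
    anchor (V.smul f X) g = f * anchor X g
  bracket : V.secs →ₗ[ℝ] V.secs →ₗ[ℝ] V.secs
  bracket_grading : ∀ {p q : ℤ} (X Y : V.secs), X ∈ V.grading p → Y ∈ V.grading q →
    bracket X Y ∈ V.grading (p + q)
  bracket_antisymm : ∀ {p q : ℤ} (X Y : V.secs), X ∈ V.grading p → Y ∈ V.grading q →
    bracket X Y = (-sgn (p * q)) • bracket Y X
  leibniz : ∀ {p i : ℤ} (X Y : V.secs) (f : 𝒮.carrier),
    X ∈ V.grading p → f ∈ 𝒮.grading i →
    bracket X (V.smul f Y) = V.smul (anchor X f) Y + sgn (p * i) • V.smul f (bracket X Y)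

namespace AlgStr

variable {𝒮 : SuperAlgebra} {V : VBundle 𝒮}

/-- The graded Jacobi identity for the bracket of a superalgebroid. -/
def Jacobi (A : AlgStr 𝒮 V) : Prop :=
  ∀ {p q r : ℤ} (X Y Z : V.secs),
    X ∈ V.grading p → Y ∈ V.grading q → Z ∈ V.grading r →
    sgn (p * r) • A.bracket X (A.bracket Y Z) + sgn (q * p) • A.bracket Y (A.bracket Z X)
      + sgn (r * q) • A.bracket Z (A.bracket X Y) = 0

/-- The anchor identity `ρ([X,Y]) = [ρ(X), ρ(Y)]`. -/
def AnchorId (A : AlgStr 𝒮 V) : Prop :=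
  ∀ {p q : ℤ} (X Y : V.secs), X ∈ V.grading p → Y ∈ V.grading q →
    A.anchor (A.bracket X Y) = sComm p q (A.anchor X) (A.anchor Y)

end AlgStr

/-- A vector bundle in the category of supermanifolds is *ordinary* if its
sections are concentrated in degree `0`. -/
def VBundle.Ordinary {𝒮 : SuperAlgebra} (V : VBundle 𝒮) : Prop :=
  ∀ p : ℤ, p ≠ 0 → V.grading p = ⊥

/-- A model of the shifted bundle `[−1]𝒜` of a vector bundle `𝒜 → ℳ`: its
algebra of functions (algebroid pseudoforms) `Ω = Sym [1]Γ(𝒜^*)`, together with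
the contraction operators `ι_X ∈ 𝔛([−1]𝒜)` (of degree `|X| − 1`) determined by
the nondegenerate pairing of sections with fibrewise-linear functions. -/
structure OddModel (𝒮 : SuperAlgebra) (V : VBundle 𝒮) extends BundleAlg 𝒮 where
  ctr : V.secs →ₗ[ℝ] Module.End ℝ Ω.carrier
  ctr_der : ∀ {p : ℤ} (X : V.secs), X ∈ V.grading p → Ω.IsSuperDer (p - 1) (ctr X)
  ctr_incl : ∀ X f, ctr X (incl f) = 0
  ctr_lin : ∀ X, ∀ α ∈ lin, ctr X α ∈ Set.range incl
  ctr_inj : ∀ X, (∀ α ∈ lin, ctr X α = 0) → X = 0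
  nondeg : ∀ α ∈ lin, (∀ X, ctr X α = 0) → α = 0

/-- The differential `d_𝒜 ∈ 𝔛([−1]𝒜)` of a superalgebroid: the degree `1`
vector field on `[−1]𝒜` characterized by the Cartan-type formulas
`ι_X d_𝒜 f = ρ(X) f` on base functions and
`ι_{[X,Y]} ω = [[ι_X, d_𝒜], ι_Y] ω` on fibrewise-linear functions. -/
structure AlgDiff {𝒮 : SuperAlgebra} {V : VBundle 𝒮}
    (A : AlgStr 𝒮 V) (O : OddModel 𝒮 V) where
  d : Module.End ℝ O.Ω.carrier
  d_der : O.Ω.IsSuperDer 1 d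
  d_incl : ∀ f, d (O.incl f) ∈ O.lin
  d_anchor : ∀ X f, O.ctr X (d (O.incl f)) = O.incl (A.anchor X f)
  d_bracket : ∀ {p q : ℤ} (X Y : V.secs), X ∈ V.grading p → Y ∈ V.grading q →
    ∀ α ∈ O.lin,
    O.ctr (A.bracket X Y) α = sComm p (q - 1) (sComm (p - 1) 1 (O.ctr X) d) (O.ctr Y) α

/-- The Lie derivative `L_X = [ι_X, d_𝒜]` on `[−1]𝒜` of a degree `p` section. -/
def lieD {𝒮 : SuperAlgebra} {V : VBundle 𝒮} {A : AlgStr 𝒮 V} (O : OddModel 𝒮 V)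
    (D : AlgDiff A O) (p : ℤ) (X : V.secs) : Module.End ℝ O.Ω.carrier :=
  sComm (p - 1) 1 (O.ctr X) D.d

/-- The degree-shift `[−j]` applied to a vector bundle `ℰ → ℳ`, realized as the
degree `j` left `C^∞(ℳ)`-module isomorphism `α ↦ α̂` from the fibrewise-linear
functions on `ℰ` to those on `[−j]ℰ`. -/
structure Shift (𝒮 : SuperAlgebra) (E E' : BundleAlg 𝒮) (j : ℤ) where
  hat : E.Ω.carrier →ₗ[ℝ] E'.Ω.carrier
  hat_lin : ∀ α ∈ E.lin, hat α ∈ E'.lin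
  hat_bij : ∀ β ∈ E'.lin, ∃! α, α ∈ E.lin ∧ hat α = β
  hat_grading : ∀ {i : ℤ} (α : E.Ω.carrier), α ∈ E.lin → α ∈ E.Ω.grading i →
    hat α ∈ E'.Ω.grading (i + j)
  hat_smul : ∀ f, ∀ α ∈ E.lin, hat (E.incl f * α) = E'.incl f * hat α

/-- `Ξ'` is the linear vector field on `[−j]ℰ` induced by the linear vector
field `Ξ` on `ℰ` (both of degree `k`): it is linear, has the same base vector
field, and satisfies `Ξ'(α̂) = (Ξ(α))^` on fibrewise-linear functions. -/
def Shifted {𝒮 : SuperAlgebra} {E E' : BundleAlg 𝒮} {j : ℤ} (S : Shift 𝒮 E E' j)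
    (k : ℤ) (Ξ : Module.End ℝ E.Ω.carrier) (Ξ' : Module.End ℝ E'.Ω.carrier) : Prop :=
  E'.IsLinVF k Ξ' ∧
  (∀ f g, Ξ (E.incl f) = E.incl g → Ξ' (E'.incl f) = E'.incl g) ∧
  ∀ α ∈ E.lin, Ξ' (S.hat α) = S.hat (Ξ α)

/-- A morphic vector field on a superalgebroid `𝒜 → ℳ`: a linear vector field
`Ξ = op` on `𝒜` whose induced linear vector field `Ξ₁ = op₁` on `[−1]𝒜`
commutes with the algebroid differential, `[d_𝒜, Ξ₁] = 0`. -/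
structure MorphicVF {𝒮 : SuperAlgebra} {V : VBundle 𝒮} (A : AlgStr 𝒮 V)
    (O : OddModel 𝒮 V) (D : AlgDiff A O) (E : BundleAlg 𝒮)
    (S : Shift 𝒮 E O.toBundleAlg 1) where
  deg : ℤ
  op : Module.End ℝ E.Ω.carrier
  linvf : E.IsLinVF deg op
  op₁ : Module.End ℝ O.Ω.carrier
  shifted : Shifted S deg op op₁
  morphic : sComm 1 deg D.d op₁ = 0

-- AUX
lemma sgn_even {n : ℤ} (h : Even n) : sgn n = 1 := by
  simp [sgn, Even.neg_one_pow (Int.natAbs_even.mpr h)]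
lemma sgn_odd {n : ℤ} (h : Odd n) : sgn n = -1 := by
  simp [sgn, Odd.neg_one_pow (Int.natAbs_odd.mpr h)]
lemma sgn_eq (n : ℤ) : sgn n = if Even n then 1 else -1 := by
  split
  · exact sgn_even ‹_›
  · exact sgn_odd (Int.not_even_iff_odd.mp ‹_›)
lemma sgn_mul_self (n : ℤ) : sgn n * sgn n = 1 := by
  rcases Int.even_or_odd n with h | h
  · rw [sgn_even h]; ring
  · rw [sgn_odd h]; ring

variable {W : Type} [AddCommGroup W] [Module ℝ W]

lemma sComm_antisymm (p q : ℤ) (D E : Module.End ℝ W) :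
    sComm p q D E = -(sgn (p * q) • sComm q p E D) := by
  simp only [sComm, smul_sub, mul_comm q p, smul_smul, sgn_mul_self, one_smul, neg_sub]

lemma sComm_jacobi (a b c : ℤ) (D E F : Module.End ℝ W) :
    sComm a (b + c) D (sComm b c E F)
      = sComm (a + b) c (sComm a b D E) F
        + sgn (a * b) • sComm b (a + c) E (sComm a c D F) := by
  by_cases ha : Even a <;> by_cases hb : Even b <;> by_cases hc : Even c <;>
  · simp only [sComm, sgn_eq, Int.even_mul, Int.even_add, ha, hb, hc]
    norm_num
    noncomm_ring

lemma sComm_apply (p q : ℤ) (D E : Module.End ℝ W) (x : W) :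
    sComm p q D E x = D (E x) - sgn (p * q) • E (D x) := by
  simp [sComm, Module.End.mul_apply]

lemma isSuperDer_sComm (Ω : SuperAlgebra) {j k : ℤ} {D E : Module.End ℝ Ω.carrier}
    (hD : Ω.IsSuperDer j D) (hE : Ω.IsSuperDer k E) :
    Ω.IsSuperDer (j + k) (sComm j k D E) := by
  constructor
  · intro i a ha
    have h1 : D (E a) ∈ Ω.grading (i + (j + k)) := by
      have := hD.1 (i + k) (E a) (hE.1 i a ha)
      convert this using 2; ring
    have h2 : E (D a) ∈ Ω.grading (i + (j + k)) := by
      have := hE.1 (i + j) (D a) (hD.1 i a ha)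
      convert this using 2; ring
    rw [sComm_apply]
    exact Submodule.sub_mem _ h1 (zsmul_mem h2 _)
  · intro i a ha b
    have hEa := hE.1 i a ha
    have hDa := hD.1 i a ha
    have e1 : D (E (a * b)) = D (E a) * b + sgn (j * (i + k)) • (E a * D b)
        + sgn (k * i) • (D a * E b) + (sgn (k * i) * sgn (j * i)) • (a * D (E b)) := by
      rw [hE.2 i a ha b, map_add, map_zsmul, hD.2 (i + k) (E a) hEa b,
        hD.2 i a ha (E b), smul_add, smul_smul]
      abel
    have e2 : E (D (a * b)) = E (D a) * b + sgn (k * (i + j)) • (D a * E b)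
        + sgn (j * i) • (E a * D b) + (sgn (j * i) * sgn (k * i)) • (a * E (D b)) := by
      rw [hD.2 i a ha b, map_add, map_zsmul, hE.2 (i + j) (D a) hDa b,
        hE.2 i a ha (D b), smul_add, smul_smul]
      abel
    rw [sComm_apply, e1, e2, sComm_apply, sComm_apply, sub_mul, mul_sub]
    by_cases hi : Even i <;> by_cases hj : Even j <;> by_cases hk : Even k <;>
    · simp only [sgn_eq, Int.even_mul, Int.even_add, hi, hj, hk]
      norm_num
      abel

lemma zsmul_mem' {𝒮 : SuperAlgebra} (L : Submodule ℝ 𝒮.carrier) {x : 𝒮.carrier}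
    (h : x ∈ L) (n : ℤ) : n • x ∈ L := zsmul_mem h n

lemma isLinVF_sComm {𝒮 : SuperAlgebra} (E : BundleAlg 𝒮) {j k : ℤ}
    {Ξ Ψ : Module.End ℝ E.Ω.carrier} (hΞ : E.IsLinVF j Ξ) (hΨ : E.IsLinVF k Ψ) :
    E.IsLinVF (j + k) (sComm j k Ξ Ψ) := by
  refine ⟨isSuperDer_sComm _ hΞ.1 hΨ.1, ?_, ?_⟩
  · intro α hα
    rw [sComm_apply]
    exact Submodule.sub_mem _ (hΞ.2.1 _ (hΨ.2.1 α hα)) (zsmul_mem (hΨ.2.1 _ (hΞ.2.1 α hα)) _)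
  · intro f
    obtain ⟨g₁, hg₁⟩ := hΞ.2.2 f
    obtain ⟨g₂, hg₂⟩ := hΨ.2.2 f
    obtain ⟨g₃, hg₃⟩ := hΞ.2.2 g₂
    obtain ⟨g₄, hg₄⟩ := hΨ.2.2 g₁
    exact ⟨g₃ - sgn (j * k) • g₄, by
      rw [sComm_apply, hg₂, hg₃, hg₁, hg₄, map_sub, map_zsmul]⟩

lemma sComm_zero_left (p q : ℤ) (F : Module.End ℝ W) : sComm p q 0 F = 0 := by
  simp [sComm]
lemma sComm_zero_right (p q : ℤ) (F : Module.End ℝ W) : sComm p q F 0 = 0 := by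
  simp [sComm]

/-- Let `𝒜 → ℳ` be a superalgebroid.  Then:
(1) the space of morphic vector fields on `𝒜` is closed under the graded
commutator bracket (the commutator `[Ξ, Ψ]` is linear, its induced field on
`[−1]𝒜` is `[Ξ₁, Ψ₁]`, and it is again morphic); and
(2) for any morphic vector field `Ξ` and any section `X ∈ Γ_p(𝒜)`, one has
`[Ξ₁, L_X] = L_{D_Ξ X}` as vector fields on `[−1]𝒜`, where `D_Ξ` is the
operator on sections defined by `ι_{D_Ξ X} = [Ξ₁, ι_X]`. -/
theorem morphic_vector_fields_bracket
    (𝒮 : SuperAlgebra) (V : VBundle 𝒮) (A : AlgStr 𝒮 V) (O : OddModel 𝒮 V)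
    (D : AlgDiff A O) (hJ : A.Jacobi) (E : BundleAlg 𝒮)
    (S : Shift 𝒮 E O.toBundleAlg 1) :
    (∀ Ξ Ψ : MorphicVF A O D E S,
      E.IsLinVF (Ξ.deg + Ψ.deg) (sComm Ξ.deg Ψ.deg Ξ.op Ψ.op) ∧
      Shifted S (Ξ.deg + Ψ.deg) (sComm Ξ.deg Ψ.deg Ξ.op Ψ.op)
        (sComm Ξ.deg Ψ.deg Ξ.op₁ Ψ.op₁) ∧
      sComm 1 (Ξ.deg + Ψ.deg) D.d (sComm Ξ.deg Ψ.deg Ξ.op₁ Ψ.op₁) = 0) ∧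
    (∀ (Ξ : MorphicVF A O D E S) (DΞ : V.secs → V.secs),
      (∀ {p : ℤ} (X : V.secs), X ∈ V.grading p →
        O.ctr (DΞ X) = sComm Ξ.deg (p - 1) Ξ.op₁ (O.ctr X)) →
      ∀ {p : ℤ} (X : V.secs), X ∈ V.grading p →
        sComm Ξ.deg p Ξ.op₁ (lieD O D p X) = lieD O D (Ξ.deg + p) (DΞ X)) := by
  constructor
  · intro Ξ Ψ
    refine ⟨isLinVF_sComm E Ξ.linvf Ψ.linvf, ⟨isLinVF_sComm _ Ξ.shifted.1 Ψ.shifted.1, ?_, ?_⟩, ?_⟩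
    · intro f g hfg
      obtain ⟨g₁, hg₁⟩ := Ξ.linvf.2.2 f
      obtain ⟨g₂, hg₂⟩ := Ψ.linvf.2.2 f
      obtain ⟨g₃, hg₃⟩ := Ξ.linvf.2.2 g₂
      obtain ⟨g₄, hg₄⟩ := Ψ.linvf.2.2 g₁
      have hg : g = g₃ - sgn (Ξ.deg * Ψ.deg) • g₄ := by
        apply E.incl_inj
        rw [← hfg, sComm_apply, hg₂, hg₃, hg₁, hg₄, map_sub, map_zsmul]
      rw [sComm_apply, Ψ.shifted.2.1 f g₂ hg₂, Ξ.shifted.2.1 g₂ g₃ hg₃,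
        Ξ.shifted.2.1 f g₁ hg₁, Ψ.shifted.2.1 g₁ g₄ hg₄, hg, map_sub, map_zsmul]
    · intro α hα
      rw [sComm_apply, Ψ.shifted.2.2 α hα, Ξ.shifted.2.2 _ (Ψ.linvf.2.1 α hα),
        Ξ.shifted.2.2 α hα, Ψ.shifted.2.2 _ (Ξ.linvf.2.1 α hα), sComm_apply,
        map_sub, map_zsmul]
    · rw [sComm_jacobi 1 Ξ.deg Ψ.deg, Ξ.morphic, Ψ.morphic, sComm_zero_left,
        sComm_zero_right, smul_zero, add_zero]
  · intro Ξ DΞ hctr p X hX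
    have hmor : sComm Ξ.deg 1 Ξ.op₁ D.d = 0 := by
      rw [sComm_antisymm, Ξ.morphic, smul_zero, neg_zero]
    have hp : p - 1 + 1 = p := by ring
    have hj := sComm_jacobi Ξ.deg (p - 1) 1 Ξ.op₁ (O.ctr X) D.d
    rw [hp, hmor, sComm_zero_right, smul_zero, add_zero] at hj
    rw [lieD, hj, lieD, hctr X hX]
    congr 1
    ring
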